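/- Up to equivalence, SL₂ × SL₂ has exactly four real group structures: σ_s × σ_s, σ_s × σ_c, σ_c × σ_c, and the swap structure σ(g₁,g₂) = (σ_s(g₂), σ_s(g₁)). In particular, any real group structure on SL₂ × SL₂ either preserves both factors (restricting to a real group structure on each) or swaps them. -/

import Mathlib

/-!
Every real structure on `SL₂ × SL₂` is `g ↦ b σ(g) b⁻¹` or `g ↦ b σ(swap g) b⁻¹` with
`σ = σ_s × σ_s`, and it is an involution exactly when `b σ(b)` (resp. `b σ(swap b)`) is central;
conjugating it by `a` replaces `b` by `a b σ(a)⁻¹`. In the swap case `a = (b₁⁻¹, 1)` makes `b`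
central, which gives `σ ∘ swap`. In the product case `bᵢ σ_s(bᵢ) = ±1` on each factor, and a
Hilbert 90 argument gives `p ∈ SL₂` with `bᵢ σ_s(p) = ±p q`, where `q = 1` or `q = J` according
to the sign; as `σ_c = Ad J ∘ σ_s`, this brings the factor to `σ_s` or `σ_c`. Conversely, the
unordered pair `{b₁ σ_s(b₁), b₂ σ_s(b₂)}` is invariant under conjugation and swap, and the swap
type is never of product form, so the four structures are pairwise inequivalent.
-/

open Matrix

/-- `SL₂(ℂ)`. -/
abbrev SL2 := Matrix.SpecialLinearGroup (Fin 2) ℂ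

/-- `G = SL₂ × SL₂`. -/
abbrev G2 := SL2 × SL2

/-- The split real group structure `σ_s(g) = conj g` on `SL₂(ℂ)`. -/
noncomputable def sigmaS : SL2 → SL2 := fun g => SpecialLinearGroup.map (starRingEnd ℂ) g

/-- Transpose on `SL₂(ℂ)`. -/
def transposeSL (g : SL2) : SL2 :=
  ⟨(g : Matrix (Fin 2) (Fin 2) ℂ)ᵀ, by rw [Matrix.det_transpose]; exact g.2⟩

/-- The compact real group structure `σ_c(g) = (conj g)ᵀ⁻¹` on `SL₂(ℂ)`. -/
noncomputable def sigmaC : SL2 → SL2 := fun g => (transposeSL (sigmaS g))⁻¹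

/-- The factorwise conjugation `σ_s × σ_s` on `SL₂ × SL₂`. -/
noncomputable def sigmaSS : G2 → G2 := fun g => (sigmaS g.1, sigmaS g.2)

/-- An algebraic group automorphism of `SL₂ × SL₂`: an inner automorphism, possibly
composed with the swap of the two simple factors. -/
def IsAlgAut (f : G2 → G2) : Prop :=
  ∃ c : G2, (∀ g, f g = c * g * c⁻¹) ∨ (∀ g : G2, f g = c * (g.2, g.1) * c⁻¹)

/-- A real group structure on `SL₂ × SL₂`: a group-theoretic involution `σ` which is
antiregular, i.e. `σ_s × σ_s ∘ σ` is a regular (algebraic) automorphism. -/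
def IsRealGroupStructure (σ : G2 → G2) : Prop :=
  (∀ g h, σ (g * h) = σ g * σ h) ∧ (∀ g, σ (σ g) = g) ∧
    IsAlgAut (fun g => sigmaSS (σ g))

/-- Two real group structures on `SL₂ × SL₂` are equivalent if conjugate by an
algebraic group automorphism. -/
def EquivStruct (σ σ' : G2 → G2) : Prop :=
  ∃ ψ : G2 ≃* G2, IsAlgAut ψ ∧ ∀ g, σ' g = ψ (σ (ψ.symm g))

/-- The structure `σ_s × σ_s`. -/
noncomputable def tau1 : G2 → G2 := fun g => (sigmaS g.1, sigmaS g.2)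
/-- The structure `σ_s × σ_c`. -/
noncomputable def tau2 : G2 → G2 := fun g => (sigmaS g.1, sigmaC g.2)
/-- The structure `σ_c × σ_c`. -/
noncomputable def tau3 : G2 → G2 := fun g => (sigmaC g.1, sigmaC g.2)
/-- The swap structure `σ(g₁,g₂) = (σ_s(g₂), σ_s(g₁))`, with real locus `SL₂(ℂ)`. -/
noncomputable def tau4 : G2 → G2 := fun g => (sigmaS g.2, sigmaS g.1)


open Subgroup Function

section Twist

variable {H : Type*} [Group H] (s : H →* H)

def twist (b x : H) : H := b * s x * b⁻¹

variable {s}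

lemma twist_mul (b x y : H) : twist s b (x * y) = twist s b x * twist s b y := by
  simp only [twist, map_mul]; group

lemma twist_of_mem_center {z : H} (hz : z ∈ center H) : twist s z = s := by
  ext x
  rw [twist, ← mem_center_iff.mp hz (s x), mul_inv_cancel_right]

lemma conj_twist (a b c x : H) :
    a * twist s b (c⁻¹ * x * c) * a⁻¹ = twist s (a * b * (s c)⁻¹) x := by
  simp only [twist, map_mul, map_inv]; group

lemma map_conj_eq_twist (c x : H) : s (c * x * c⁻¹) = twist s (s c) x := by
  simp only [twist, map_mul, map_inv]

lemma map_twist (hs : Involutive s) (b x : H) : s (twist s b x) = s b * x * (s b)⁻¹ := by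
  rw [twist, map_conj_eq_twist, twist, hs]

lemma twist_twist (hs : Involutive s) (b b' x : H) :
    twist s b (twist s b' x) = b * s b' * x * (b * s b')⁻¹ := by
  rw [twist, map_twist hs]; group

lemma twist_injective (hs : Injective s) (b : H) : Injective (twist s b) := fun x y h => by
  simpa [twist, hs.eq_iff] using h

lemma mem_center_iff_forall_conj_eq {z : H} : z ∈ center H ↔ ∀ x, z * x * z⁻¹ = x :=
  mem_center_iff.trans <| forall_congr' fun x => by
    rw [mul_inv_eq_iff_eq_mul]; exact ⟨Eq.symm, Eq.symm⟩

lemma inv_mul_mem_center_of_twist_eq (hs : Surjective s) {b b' : H}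
    (h : twist s b = twist s b') : b'⁻¹ * b ∈ center H :=
  mem_center_iff_forall_conj_eq.mpr fun x => by
    obtain ⟨y, rfl⟩ := hs x
    calc b'⁻¹ * b * s y * (b'⁻¹ * b)⁻¹ = b'⁻¹ * twist s b y * b' := by rw [twist]; group
      _ = s y := by rw [congrFun h y, twist]; group

lemma twistedConj_mul_map (hs : Involutive s) (a : H) {b : H} (hb : b * s b ∈ center H) :
    a * b * (s a)⁻¹ * s (a * b * (s a)⁻¹) = b * s b := by
  have : a * (b * s b) * a⁻¹ = b * s b := by
    rw [mem_center_iff.mp hb a, mul_inv_cancel_right]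
  simp only [map_mul, map_inv, hs a]
  rw [← this]; group

end Twist

abbrev sigmaSHom : SL2 →* SL2 := SpecialLinearGroup.map (starRingEnd ℂ)

lemma coe_sigmaSHom (g : SL2) :
    (sigmaSHom g : Matrix (Fin 2) (Fin 2) ℂ) = g.1.map (starRingEnd ℂ) :=
  rfl

lemma sigmaSHom_apply (g : SL2) : sigmaSHom g = sigmaS g := rfl

lemma sigmaSHom_involutive : Involutive sigmaSHom := fun g => by
  ext i j; simp

lemma sigmaSHom_neg (g : SL2) : sigmaSHom (-g) = -sigmaSHom g := by
  ext i j; simp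

def symplecticJ : SL2 := ⟨!![0, 1; -1, 0], by simp [det_fin_two_of]⟩

lemma coe_symplecticJ : (symplecticJ : Matrix (Fin 2) (Fin 2) ℂ) = !![0, 1; -1, 0] := rfl

lemma symplecticJ_mul_sigmaSHom : symplecticJ * sigmaSHom symplecticJ = -1 := by
  refine Matrix.SpecialLinearGroup.ext _ _ fun i j => ?_
  fin_cases i <;> fin_cases j <;> simp [coe_symplecticJ, mul_apply]

lemma coe_transposeSL (g : SL2) :
    (transposeSL g : Matrix (Fin 2) (Fin 2) ℂ) = (g : Matrix (Fin 2) (Fin 2) ℂ)ᵀ :=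
  rfl

lemma sigmaC_eq_twist : sigmaC = twist sigmaSHom symplecticJ := by
  funext g
  refine Matrix.SpecialLinearGroup.ext _ _ fun i j => ?_
  fin_cases i <;> fin_cases j <;>
    simp [sigmaC, twist, ← sigmaSHom_apply, Matrix.SpecialLinearGroup.coe_inv, coe_transposeSL,
      coe_symplecticJ, adjugate_fin_two, vecMul, dotProduct, mul_apply, Fin.sum_univ_two]

lemma mem_center_SL2_iff {z : SL2} : z ∈ center SL2 ↔ z = 1 ∨ z = -1 := by
  constructor
  · intro hz
    obtain ⟨r, hr, hrz⟩ := Matrix.SpecialLinearGroup.mem_center_iff.mp hz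
    rcases sq_eq_one_iff.mp hr with rfl | rfl
    · left; ext1; simp [← hrz]
    · right; ext1; rw [← hrz, map_neg, map_one]; rfl
  · rintro (rfl | rfl)
    · exact one_mem _
    · exact mem_center_iff.mpr fun g => by rw [mul_neg_one, neg_one_mul]

lemma neg_one_ne_one_SL2 : (-1 : SL2) ≠ 1 := fun h => by
  have := congrArg (fun g : SL2 => g 0 0) h
  norm_num at this

lemma twist_neg (b : SL2) : twist sigmaSHom (-b) = twist sigmaSHom b := by
  funext x; simp [twist]

lemma mul_sigmaSHom_eq_of_twist_eq {b b' : SL2} (h : twist sigmaSHom b = twist sigmaSHom b') :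
    b * sigmaSHom b = b' * sigmaSHom b' := by
  have hz := inv_mul_mem_center_of_twist_eq sigmaSHom_involutive.surjective h
  rcases mem_center_SL2_iff.mp hz with hz | hz
  · rw [inv_mul_eq_one.mp hz]
  · rw [← mul_inv_cancel_left b' b, hz]; simp [sigmaSHom_neg]

lemma exists_twist_eq_of_mul_map_conj {b q : SL2} {P : Matrix (Fin 2) (Fin 2) ℂ}
    (hP : P.det ≠ 0) (h : (b : Matrix (Fin 2) (Fin 2) ℂ) * P.map (starRingEnd ℂ) = P * q) :
    ∃ a : SL2, twist sigmaSHom (a * b * (sigmaSHom a)⁻¹) = twist sigmaSHom q := by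
  -- `det P` is real, so a square root `t` of `(det P)⁻¹` has `conj t = ± t`: the matrix
  -- `p = t • P` lies in `SL₂` and satisfies `b σ_s(p) = ± p q`.
  have hdet : starRingEnd ℂ P.det = P.det := by
    simpa [RingHom.map_det] using congrArg det h
  obtain ⟨t, ht⟩ := IsAlgClosed.exists_pow_nat_eq P.det⁻¹ two_pos
  let p : SL2 := ⟨t • P, by rw [det_smul, Fintype.card_fin, ht, inv_mul_cancel₀ hP]⟩
  have hpP : (p : Matrix (Fin 2) (Fin 2) ℂ) = t • P := rfl
  have hpq : ((p * q : SL2) : Matrix (Fin 2) (Fin 2) ℂ) = t • (P * q) := by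
    rw [Matrix.SpecialLinearGroup.coe_mul, hpP, smul_mul]
  have hp : ((b * sigmaSHom p : SL2) : Matrix (Fin 2) (Fin 2) ℂ) =
      starRingEnd ℂ t • (P * q) := by
    rw [Matrix.SpecialLinearGroup.coe_mul, coe_sigmaSHom, hpP, map_smul' _ _ _ (map_mul _),
      Matrix.mul_smul, h]
  have hconj : starRingEnd ℂ t = t ∨ starRingEnd ℂ t = -t :=
    sq_eq_sq_iff_eq_or_eq_neg.mp (by rw [← map_pow, ht, map_inv₀, hdet])
  refine ⟨p⁻¹, ?_⟩
  rw [map_inv, inv_inv, mul_assoc]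
  rcases hconj with ht' | ht'
  · have : b * sigmaSHom p = p * q := by ext1; simp [hp, hpq, ht']
    rw [this, inv_mul_cancel_left]
  · have : b * sigmaSHom p = -(p * q) := by ext1; simp [hp, hpq, ht']
    rw [this, mul_neg, inv_mul_cancel_left, twist_neg]

lemma exists_twist_eq_sigmaS {b : SL2} (hb : b * sigmaSHom b = 1) :
    ∃ a : SL2, twist sigmaSHom (a * b * (sigmaSHom a)⁻¹) = sigmaS := by
  set B := (b : Matrix (Fin 2) (Fin 2) ℂ)
  have hB : B * B.map (starRingEnd ℂ) = 1 := by
    simpa [coe_sigmaSHom] using congrArg (fun g : SL2 => (g : Matrix (Fin 2) (Fin 2) ℂ)) hb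
  have hsum : (1 + B).det + (1 - B).det = 4 := by
    have := b.det_coe
    simp only [det_fin_two] at this ⊢
    simp only [Matrix.add_apply, Matrix.sub_apply, one_apply_eq, one_apply_ne zero_ne_one,
      one_apply_ne one_ne_zero]
    linear_combination 2 * this
  suffices ∃ P : Matrix (Fin 2) (Fin 2) ℂ, P.det ≠ 0 ∧ B * P.map (starRingEnd ℂ) = P * 1 by
    obtain ⟨P, hP, h⟩ := this
    obtain ⟨a, ha⟩ := exists_twist_eq_of_mul_map_conj (q := 1) hP (by simpa using h)
    exact ⟨a, ha.trans (twist_of_mem_center (one_mem _))⟩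
  -- Both `1 + B` and `I • (1 - B)` are of the form `X + B · conj X`; by `hsum` one of them
  -- is invertible.
  by_cases h1 : (1 + B).det = 0
  · refine ⟨Complex.I • (1 - B), ?_, ?_⟩
    · rw [det_smul, Fintype.card_fin, Complex.I_sq, ← sub_eq_of_eq_add' hsum.symm, h1]
      norm_num
    · rw [map_smul' _ _ _ (map_mul _), Matrix.map_sub _ (map_sub _),
        Matrix.map_one _ (map_zero _) (map_one _), Complex.conj_I, Matrix.mul_smul,
        Matrix.mul_sub, hB, Matrix.mul_one, Matrix.mul_one, neg_smul, ← smul_neg, neg_sub]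
  · refine ⟨1 + B, h1, ?_⟩
    rw [Matrix.map_add _ (map_add _), Matrix.map_one _ (map_zero _) (map_one _),
      Matrix.mul_add, hB, Matrix.mul_one, Matrix.mul_one, add_comm]

lemma exists_twist_eq_sigmaC {b : SL2} (hb : b * sigmaSHom b = -1) :
    ∃ a : SL2, twist sigmaSHom (a * b * (sigmaSHom a)⁻¹) = sigmaC := by
  set B := (b : Matrix (Fin 2) (Fin 2) ℂ)
  have hB : B * B.map (starRingEnd ℂ) = -1 := by
    simpa [coe_sigmaSHom] using congrArg (fun g : SL2 => (g : Matrix (Fin 2) (Fin 2) ℂ)) hb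
  have hB_entry (i j : Fin 2) : B i 0 * starRingEnd ℂ (B 0 j) + B i 1 * starRingEnd ℂ (B 1 j) =
      -(1 : Matrix (Fin 2) (Fin 2) ℂ) i j := by
    simpa [mul_apply, Fin.sum_univ_two] using congrFun (congrFun hB i) j
  have hB10 : B 1 0 ≠ 0 := by
    intro h0
    have h11 := hB_entry 1 1
    rw [h0, zero_mul, zero_add, Complex.mul_conj] at h11
    have := congrArg Complex.re h11
    simp only [Complex.ofReal_re, one_apply_eq, Complex.neg_re, Complex.one_re] at this
    linarith [Complex.normSq_nonneg (B 1 1)]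
  have h00 : B 0 0 * starRingEnd ℂ (B 0 0) + B 0 1 * starRingEnd ℂ (B 1 0) = -1 := by
    simpa using hB_entry 0 0
  have h10 : B 1 0 * starRingEnd ℂ (B 0 0) + B 1 1 * starRingEnd ℂ (B 1 0) = 0 := by
    simpa using hB_entry 1 0
  rw [sigmaC_eq_twist]
  -- `P = (e₀ | -B e₀)`, and `B P̄ = P J` because `B B̄ = -1`.
  refine exists_twist_eq_of_mul_map_conj (P := !![1, -B 0 0; 0, -B 1 0]) (by simpa using hB10) ?_
  ext i j
  fin_cases i <;> fin_cases j <;> simp [coe_symplecticJ, mul_apply, Fin.sum_univ_two]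
  · rfl
  · linear_combination -h00
  · rfl
  · linear_combination -h10

lemma exists_twist_eq_sigmaS_or_sigmaC {b : SL2} (hb : b * sigmaSHom b ∈ center SL2) :
    ∃ a : SL2, twist sigmaSHom (a * b * (sigmaSHom a)⁻¹) = sigmaS ∨
      twist sigmaSHom (a * b * (sigmaSHom a)⁻¹) = sigmaC := by
  rcases mem_center_SL2_iff.mp hb with h | h
  · obtain ⟨a, ha⟩ := exists_twist_eq_sigmaS h
    exact ⟨a, Or.inl ha⟩
  · obtain ⟨a, ha⟩ := exists_twist_eq_sigmaC h
    exact ⟨a, Or.inr ha⟩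

abbrev sigmaSSHom : G2 →* G2 := sigmaSHom.prodMap sigmaSHom

lemma sigmaSSHom_involutive : Involutive sigmaSSHom := fun g =>
  Prod.ext (sigmaSHom_involutive g.1) (sigmaSHom_involutive g.2)

lemma twist_sigmaSSHom_mk (x y : SL2) :
    twist sigmaSSHom (x, y) = Prod.map (twist sigmaSHom x) (twist sigmaSHom y) := rfl

lemma twist_twistedConj_mk (a₁ a₂ : SL2) (b : G2) :
    twist sigmaSSHom ((a₁, a₂) * b * (sigmaSSHom (a₁, a₂))⁻¹) =
      Prod.map (twist sigmaSHom (a₁ * b.1 * (sigmaSHom a₁)⁻¹))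
        (twist sigmaSHom (a₂ * b.2 * (sigmaSHom a₂)⁻¹)) := rfl

lemma swap_twist_swap (b g : G2) :
    (twist sigmaSSHom b g.swap).swap = twist sigmaSSHom b.swap g := rfl

lemma mem_center_G2_iff {z : G2} : z ∈ center G2 ↔ z.1 ∈ center SL2 ∧ z.2 ∈ center SL2 := by
  rw [Subgroup.center_prod, Subgroup.mem_prod]

lemma swap_mem_center {z : G2} (hz : z ∈ center G2) : z.swap ∈ center G2 :=
  mem_center_G2_iff.mpr (mem_center_G2_iff.mp hz).symm

lemma equivStruct_iff {σ σ' : G2 → G2} : EquivStruct σ σ' ↔ ∃ c : G2,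
    σ' = (fun g => c * σ (c⁻¹ * g * c) * c⁻¹) ∨
      σ' = (fun g => c * (σ (c⁻¹ * g * c).swap).swap * c⁻¹) := by
  constructor
  · rintro ⟨ψ, ⟨c, hc | hc⟩, h⟩ <;> refine ⟨c, ?_⟩
    · have hsymm (g : G2) : ψ.symm g = c⁻¹ * g * c := ψ.injective <| by
        rw [MulEquiv.apply_symm_apply, hc]; group
      exact Or.inl <| funext fun g => by rw [h, hsymm, hc]
    · have hsymm (g : G2) : ψ.symm g = (c⁻¹ * g * c).swap := ψ.injective <| by
        rw [MulEquiv.apply_symm_apply, hc]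
        simp only [Prod.fst_swap, Prod.snd_swap, Prod.mk.eta]; group
      exact Or.inr <| funext fun g => by rw [h, hsymm, hc]; rfl
  · rintro ⟨c, rfl | rfl⟩
    · exact ⟨MulAut.conj c, ⟨c, Or.inl fun g => rfl⟩, fun g => rfl⟩
    · exact ⟨MulEquiv.prodComm.trans (MulAut.conj c), ⟨c, Or.inr fun g => rfl⟩, fun g => rfl⟩

lemma EquivStruct.symm {σ σ' : G2 → G2} (h : EquivStruct σ σ') : EquivStruct σ' σ := by
  obtain ⟨c, rfl | rfl⟩ := equivStruct_iff.mp h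
  · refine equivStruct_iff.mpr ⟨c⁻¹, Or.inl <| funext fun g => ?_⟩
    simp only [inv_inv]; group
  · refine equivStruct_iff.mpr ⟨c⁻¹.swap, Or.inr <| funext fun g => ?_⟩
    simp only [Prod.swap_mul, Prod.swap_inv, Prod.swap_swap]; group

lemma equivStruct_twist_iff {b : G2} {σ' : G2 → G2} : EquivStruct (twist sigmaSSHom b) σ' ↔
    ∃ c : G2, σ' = twist sigmaSSHom (c * b * (sigmaSSHom c)⁻¹) ∨
      σ' = twist sigmaSSHom (c * b.swap * (sigmaSSHom c)⁻¹) := by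
  simp only [equivStruct_iff, swap_twist_swap, conj_twist]

lemma isRealGroupStructure_iff {σ : G2 → G2} : IsRealGroupStructure σ ↔
    (∃ b : G2, b * sigmaSSHom b ∈ center G2 ∧ σ = twist sigmaSSHom b) ∨
      (∃ b : G2, b * sigmaSSHom b.swap ∈ center G2 ∧ σ = twist sigmaSSHom b ∘ Prod.swap) := by
  have hs := sigmaSSHom_involutive
  constructor
  · rintro ⟨-, hinv, c, hc | hc⟩
    · replace hc : ∀ g, sigmaSSHom (σ g) = c * g * c⁻¹ := hc
      have hσ : σ = twist sigmaSSHom (sigmaSSHom c) := funext fun g => by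
        rw [← map_conj_eq_twist, ← hc, hs]
      refine Or.inl ⟨_, mem_center_iff_forall_conj_eq.mpr fun g => ?_, hσ⟩
      rw [← twist_twist hs, ← hσ, hinv]
    · replace hc : ∀ g, sigmaSSHom (σ g) = c * g.swap * c⁻¹ := hc
      have hσ : σ = twist sigmaSSHom (sigmaSSHom c) ∘ Prod.swap := funext fun g => by
        rw [Function.comp_apply, ← map_conj_eq_twist, ← hc, hs]
      refine Or.inr ⟨_, mem_center_iff_forall_conj_eq.mpr fun g => ?_, hσ⟩
      rw [← twist_twist hs, ← swap_twist_swap, ← Function.comp_apply (f := twist _ _), ← hσ,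
        ← Function.comp_apply (f := twist _ _), ← hσ, hinv]
  · rintro (⟨b, hb, rfl⟩ | ⟨b, hb, rfl⟩)
    · refine ⟨twist_mul b, fun g => ?_, sigmaSSHom b, Or.inl (map_twist hs b)⟩
      rw [twist_twist hs, mem_center_iff_forall_conj_eq.mp hb]
    · refine ⟨fun g h => ?_, fun g => ?_, sigmaSSHom b, Or.inr fun g => map_twist hs b g.swap⟩
      · simp only [Function.comp_apply, Prod.swap_mul, twist_mul]
      · rw [Function.comp_apply, Function.comp_apply, swap_twist_swap, twist_twist hs,
          mem_center_iff_forall_conj_eq.mp hb]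

lemma tau1_eq_twist : tau1 = twist sigmaSSHom (1, 1) := by
  rw [twist_sigmaSSHom_mk, twist_of_mem_center (one_mem _)]; rfl

lemma tau2_eq_twist : tau2 = twist sigmaSSHom (1, symplecticJ) := by
  rw [twist_sigmaSSHom_mk, twist_of_mem_center (one_mem _), ← sigmaC_eq_twist]; rfl

lemma tau3_eq_twist : tau3 = twist sigmaSSHom (symplecticJ, symplecticJ) := by
  rw [twist_sigmaSSHom_mk, ← sigmaC_eq_twist]; rfl

lemma tau4_eq_twist_comp_swap : tau4 = twist sigmaSSHom 1 ∘ Prod.swap := by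
  rw [twist_of_mem_center (one_mem _)]; rfl

lemma mul_sigmaSSHom_eq_of_twist_eq {b b' : G2} (h : twist sigmaSSHom b = twist sigmaSSHom b') :
    b * sigmaSSHom b = b' * sigmaSSHom b' := by
  have h₁ : twist sigmaSHom b.1 = twist sigmaSHom b'.1 :=
    funext fun x => congrArg Prod.fst (congrFun h (x, 1))
  have h₂ : twist sigmaSHom b.2 = twist sigmaSHom b'.2 :=
    funext fun x => congrArg Prod.snd (congrFun h (1, x))
  exact Prod.ext (mul_sigmaSHom_eq_of_twist_eq h₁) (mul_sigmaSHom_eq_of_twist_eq h₂)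

def normPair (b : G2) : Sym2 SL2 := s(b.1 * sigmaSHom b.1, b.2 * sigmaSHom b.2)

lemma normPair_eq_of_equivStruct {b b' : G2} (hb : b * sigmaSSHom b ∈ center G2)
    (h : EquivStruct (twist sigmaSSHom b) (twist sigmaSSHom b')) : normPair b' = normPair b := by
  have hnorm (b : G2) : normPair b = s((b * sigmaSSHom b).1, (b * sigmaSSHom b).2) := rfl
  obtain ⟨c, hc | hc⟩ := equivStruct_twist_iff.mp h
  · rw [hnorm, hnorm, mul_sigmaSSHom_eq_of_twist_eq hc,
      twistedConj_mul_map sigmaSSHom_involutive c hb]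
  · rw [hnorm, mul_sigmaSSHom_eq_of_twist_eq hc,
      twistedConj_mul_map sigmaSSHom_involutive c (swap_mem_center hb)]
    exact Sym2.eq_swap

lemma tau4_ne_twist (b : G2) : tau4 ≠ twist sigmaSSHom b := fun h => by
  have h₁ := congrArg Prod.fst (congrFun h (-1, 1))
  have h₂ := congrArg Prod.fst (congrFun h (1, 1))
  exact neg_one_ne_one_SL2 <|
    twist_injective sigmaSHom_involutive.injective b.1 (h₁.symm.trans h₂)

lemma not_equivStruct_twist_tau4 (b : G2) : ¬EquivStruct (twist sigmaSSHom b) tau4 := fun h => by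
  obtain ⟨c, hc | hc⟩ := equivStruct_twist_iff.mp h <;> exact tau4_ne_twist _ hc

lemma pairwise_not_equivStruct_taus :
    [tau1, tau2, tau3, tau4].Pairwise (fun τ τ' => ¬EquivStruct τ τ') := by
  have hne (b b' : G2) (hb : b * sigmaSSHom b ∈ center G2) (h : normPair b' ≠ normPair b) :
      ¬EquivStruct (twist sigmaSSHom b) (twist sigmaSSHom b') :=
    fun he => h (normPair_eq_of_equivStruct hb he)
  simp only [List.pairwise_cons, List.mem_cons, forall_eq_or_imp, List.not_mem_nil,
    false_implies, implies_true, List.Pairwise.nil, and_true]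
  rw [tau1_eq_twist, tau2_eq_twist, tau3_eq_twist]
  refine ⟨⟨hne _ _ ?_ ?_, hne _ _ ?_ ?_, not_equivStruct_twist_tau4 _⟩,
    ⟨hne _ _ ?_ ?_, not_equivStruct_twist_tau4 _⟩, not_equivStruct_twist_tau4 _⟩ <;>
    simp [normPair, mem_center_G2_iff, mem_center_SL2_iff, symplecticJ_mul_sigmaSHom,
      neg_one_ne_one_SL2]

lemma equivStruct_twist_tau {b : G2} (hb : b * sigmaSSHom b ∈ center G2) :
    EquivStruct (twist sigmaSSHom b) tau1 ∨ EquivStruct (twist sigmaSSHom b) tau2 ∨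
      EquivStruct (twist sigmaSSHom b) tau3 := by
  rw [mem_center_G2_iff] at hb
  obtain ⟨a₁, h₁⟩ := exists_twist_eq_sigmaS_or_sigmaC hb.1
  obtain ⟨a₂, h₂⟩ := exists_twist_eq_sigmaS_or_sigmaC hb.2
  simp only [equivStruct_twist_iff]
  rcases h₁ with h₁ | h₁ <;> rcases h₂ with h₂ | h₂
  · exact Or.inl ⟨(a₁, a₂), Or.inl (by rw [twist_twistedConj_mk, h₁, h₂]; rfl)⟩
  · exact Or.inr <| Or.inl ⟨(a₁, a₂), Or.inl (by rw [twist_twistedConj_mk, h₁, h₂]; rfl)⟩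
  · refine Or.inr <| Or.inl ⟨(a₂, a₁), Or.inr ?_⟩
    rw [twist_twistedConj_mk, Prod.fst_swap, Prod.snd_swap, h₁, h₂]; rfl
  · exact Or.inr <| Or.inr ⟨(a₁, a₂), Or.inl (by rw [twist_twistedConj_mk, h₁, h₂]; rfl)⟩

lemma equivStruct_twist_comp_swap_tau4 {b : G2} (hb : b * sigmaSSHom b.swap ∈ center G2) :
    EquivStruct (twist sigmaSSHom b ∘ Prod.swap) tau4 := by
  set c : G2 := (b.1⁻¹, 1)
  have hc : c * b * (sigmaSSHom c.swap)⁻¹ ∈ center G2 := by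
    rw [mem_center_G2_iff] at hb ⊢
    simpa [c] using hb.2
  refine equivStruct_iff.mpr ⟨c, Or.inl (funext fun g => ?_)⟩
  calc tau4 g = twist sigmaSSHom (c * b * (sigmaSSHom c.swap)⁻¹) g.swap := by
        rw [twist_of_mem_center hc]; rfl
    _ = c * twist sigmaSSHom b (c.swap⁻¹ * g.swap * c.swap) * c⁻¹ := (conj_twist ..).symm

/-- Up to equivalence, `SL₂ × SL₂` has exactly four real group structures:
`σ_s × σ_s`, `σ_s × σ_c`, `σ_c × σ_c` and the swap structure
`(g₁,g₂) ↦ (σ_s(g₂), σ_s(g₁))`; these four are pairwise inequivalent and every real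
group structure on `SL₂ × SL₂` is equivalent to one of them. -/
theorem real_structures_on_SL2_times_SL2 :
    (IsRealGroupStructure tau1 ∧ IsRealGroupStructure tau2 ∧
      IsRealGroupStructure tau3 ∧ IsRealGroupStructure tau4) ∧
    (∀ τ τ' : G2 → G2, τ ∈ [tau1, tau2, tau3, tau4] → τ' ∈ [tau1, tau2, tau3, tau4] →
      τ ≠ τ' → ¬ EquivStruct τ τ') ∧
    (∀ σ : G2 → G2, IsRealGroupStructure σ →
      EquivStruct σ tau1 ∨ EquivStruct σ tau2 ∨ EquivStruct σ tau3 ∨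
        EquivStruct σ tau4) := by
  have hJ := symplecticJ_mul_sigmaSHom
  refine ⟨⟨?_, ?_, ?_, ?_⟩, ?_, fun σ hσ => ?_⟩
  · exact isRealGroupStructure_iff.mpr <| .inl ⟨_, by simp [mem_center_G2_iff], tau1_eq_twist⟩
  · exact isRealGroupStructure_iff.mpr <| .inl
      ⟨_, by simp [mem_center_G2_iff, mem_center_SL2_iff, hJ], tau2_eq_twist⟩
  · exact isRealGroupStructure_iff.mpr <| .inl
      ⟨_, by simp [mem_center_G2_iff, mem_center_SL2_iff, hJ], tau3_eq_twist⟩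
  · exact isRealGroupStructure_iff.mpr <| .inr
      ⟨_, by simp [mem_center_G2_iff], tau4_eq_twist_comp_swap⟩
  · have : Std.Symm fun τ τ' => ¬EquivStruct τ τ' := ⟨fun _ _ h h' => h h'.symm⟩
    exact fun τ τ' hτ hτ' => pairwise_not_equivStruct_taus.forall hτ hτ'
  · rcases isRealGroupStructure_iff.mp hσ with ⟨b, hb, rfl⟩ | ⟨b, hb, rfl⟩
    · rcases equivStruct_twist_tau hb with h | h | h <;> simp [h]
    · exact .inr <| .inr <| .inr <| equivStruct_twist_comp_swap_tau4 hb
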